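/- Let (a_{i,j}) for i ∈ {1,2,3}, j ∈ {1,2} be positive integers and set a_i = a_{i,1} + a_{i,2} for each i. Then m(a₁,a₂,a₃;3) ≤ m(a_{1,1},a_{2,1},a_{3,1};3) + m(a_{1,1},a_{2,2},a_{3,2};3) + m(a_{1,2},a_{2,1},a_{3,2};3) + m(a_{1,2},a_{2,2},a_{3,1};3). -/

import Mathlib

namespace BP

/-- The `r`-neighbour bootstrap closure of `A₀` in `G`: the smallest set `S` containing `A₀`
such that every vertex with at least `r` neighbours in `S` belongs to `S`. -/
def closure {V : Type*} (G : SimpleGraph V) (r : ℕ) (A₀ : Set V) : Set V :=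
  ⋂₀ {S : Set V | A₀ ⊆ S ∧ ∀ v : V, r ≤ (G.neighborSet v ∩ S).ncard → v ∈ S}

/-- `A₀` percolates under the `r`-neighbour bootstrap process in `G`. -/
def Percolates {V : Type*} (G : SimpleGraph V) (r : ℕ) (A₀ : Set V) : Prop :=
  closure G r A₀ = Set.univ

/-- The minimum cardinality of a set percolating under the `r`-neighbour process in `G`. -/
noncomputable def minPerc {V : Type*} (G : SimpleGraph V) (r : ℕ) : ℕ :=
  sInf {n : ℕ | ∃ A₀ : Set V, Percolates G r A₀ ∧ A₀.ncard = n}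

/-- The three-dimensional grid graph `[a₁] × [a₂] × [a₃]` (vertices indexed from `0` via `Fin`). -/
def grid3 (a₁ a₂ a₃ : ℕ) : SimpleGraph (Fin a₁ × Fin a₂ × Fin a₃) where
  Adj u v :=
    (u.2 = v.2 ∧ ((u.1 : ℕ) + 1 = (v.1 : ℕ) ∨ (v.1 : ℕ) + 1 = (u.1 : ℕ))) ∨
    (u.1 = v.1 ∧ u.2.2 = v.2.2 ∧
      ((u.2.1 : ℕ) + 1 = (v.2.1 : ℕ) ∨ (v.2.1 : ℕ) + 1 = (u.2.1 : ℕ))) ∨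
    (u.1 = v.1 ∧ u.2.1 = v.2.1 ∧
      ((u.2.2 : ℕ) + 1 = (v.2.2 : ℕ) ∨ (v.2.2 : ℕ) + 1 = (u.2.2 : ℕ)))
  symm := by
    constructor
    rintro u v (⟨h, h'⟩ | ⟨h1, h2, h'⟩ | ⟨h1, h2, h'⟩)
    · exact Or.inl ⟨h.symm, h'.symm⟩
    · exact Or.inr (Or.inl ⟨h1.symm, h2.symm, h'.symm⟩)
    · exact Or.inr (Or.inr ⟨h1.symm, h2.symm, h'.symm⟩)
  loopless := by
    constructor
    rintro u (⟨-, h⟩ | ⟨-, -, h⟩ | ⟨-, -, h⟩) <;> omega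

/-- `m(a₁,a₂,a₃;3)`: minimum size of a percolating set for the 3-neighbour process. -/
noncomputable def m3 (a₁ a₂ a₃ : ℕ) : ℕ := minPerc (grid3 a₁ a₂ a₃) 3

/-! Put minimal percolating sets of the four sub-boxes into the four octants of
`[a₁] × [a₂] × [a₃]` that have an even number of coordinates beyond the cuts `a_{i,1}`; these
octants become fully infected. A vertex of an odd octant has, along each axis, a neighbour one step
closer to that axis's cut. Stepping across a cut lands in an even octant, and otherwise decreases
the total distance to the three cuts, so induction on that distance infects every vertex. -/

section Closure

variable {V W : Type*} {G : SimpleGraph V} {H : SimpleGraph W} {r : ℕ} {A B T : Set V}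

lemma subset_closure : A ⊆ closure G r A :=
  fun _ hv => Set.mem_sInter.2 fun _ hS => hS.1 hv

lemma closure_minimal {S : Set V} (hA : A ⊆ S)
    (hS : ∀ v, r ≤ (G.neighborSet v ∩ S).ncard → v ∈ S) : closure G r A ⊆ S :=
  Set.sInter_subset_of_mem ⟨hA, hS⟩

lemma closure_mono (h : A ⊆ B) : closure G r A ⊆ closure G r B :=
  fun _ hv => Set.mem_sInter.2 fun S hS => Set.mem_sInter.1 hv S ⟨h.trans hS.1, hS.2⟩

lemma mem_closure_of_le_ncard [Finite V] {v : V}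
    (h : r ≤ (G.neighborSet v ∩ closure G r A).ncard) : v ∈ closure G r A :=
  Set.mem_sInter.2 fun _ hS => hS.2 v <| h.trans <| Set.ncard_le_ncard
    (Set.inter_subset_inter_right _ (Set.sInter_subset_of_mem hS)) (Set.toFinite _)

lemma mem_closure_of_finset [Finite V] {v : V} (s : Finset V) (hs : r ≤ s.card)
    (h : ∀ u ∈ s, G.Adj v u ∧ u ∈ closure G r A) : v ∈ closure G r A := by
  refine mem_closure_of_le_ncard (hs.trans ?_)
  rw [← Set.ncard_coe_finset]
  exact Set.ncard_le_ncard (fun u hu => h u hu) (Set.toFinite _)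

lemma Percolates.of_subset_closure [Finite V] (hT : Percolates G r T)
    (h : T ⊆ closure G r A) : Percolates G r A :=
  Set.eq_univ_of_univ_subset <| hT ▸ closure_minimal h fun _ => mem_closure_of_le_ncard

lemma percolates_of_descent [Finite V] (μ : V → ℕ)
    (h : ∀ v ∉ A, ∃ s : Finset V, r ≤ s.card ∧ ∀ u ∈ s, G.Adj v u ∧ (u ∈ A ∨ μ u < μ v)) :
    Percolates G r A := by
  refine Set.eq_univ_of_forall fun v => ?_
  induction v using (measure μ).wf.induction with
  | _ v ih =>
    by_cases hv : v ∈ A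
    · exact subset_closure hv
    obtain ⟨s, hs, hnbr⟩ := h v hv
    refine mem_closure_of_finset s hs fun u hu => ⟨(hnbr u hu).1, ?_⟩
    rcases (hnbr u hu).2 with huA | hlt
    · exact subset_closure huA
    · exact ih u hlt

lemma range_subset_closure_image [Finite W] (f : G →g H) (hf : Function.Injective f)
    (hA : Percolates G r A) : Set.range f ⊆ closure H r (f '' A) := by
  have hpre : closure G r A ⊆ f ⁻¹' closure H r (f '' A) := by
    refine closure_minimal (fun v hv => subset_closure ⟨v, hv, rfl⟩) fun v hv => ?_
    refine mem_closure_of_le_ncard (hv.trans ?_)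
    rw [← Set.ncard_image_of_injective _ hf]
    refine Set.ncard_le_ncard ?_ (Set.toFinite _)
    rintro _ ⟨u, ⟨hvu, hu⟩, rfl⟩
    exact ⟨f.map_adj hvu, hu⟩
  rintro _ ⟨v, rfl⟩
  exact hpre (hA ▸ Set.mem_univ v)

end Closure

section Spanning

variable {V W : Type*} {G : SimpleGraph V} {H : SimpleGraph W} {r k l : ℕ} {T T' : Set V}

def SpannedByAtMost (G : SimpleGraph V) (r k : ℕ) (T : Set V) : Prop :=
  ∃ A : Set V, A.ncard ≤ k ∧ T ⊆ closure G r A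

lemma SpannedByAtMost.mono (h : SpannedByAtMost G r k T) (hT' : T' ⊆ T) :
    SpannedByAtMost G r k T' :=
  let ⟨A, hA, hT⟩ := h
  ⟨A, hA, hT'.trans hT⟩

lemma SpannedByAtMost.union (h : SpannedByAtMost G r k T) (h' : SpannedByAtMost G r l T') :
    SpannedByAtMost G r (k + l) (T ∪ T') := by
  obtain ⟨A, hA, hT⟩ := h
  obtain ⟨A', hA', hT'⟩ := h'
  refine ⟨A ∪ A', (Set.ncard_union_le A A').trans (add_le_add hA hA'), ?_⟩
  exact Set.union_subset_union (hT.trans (closure_mono Set.subset_union_left))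
    (hT'.trans (closure_mono Set.subset_union_right)) |>.trans (Set.union_self _).subset

lemma minPerc_le_ncard {A : Set V} (hA : Percolates G r A) : minPerc G r ≤ A.ncard :=
  Nat.sInf_le ⟨A, hA, rfl⟩

lemma exists_percolates_ncard_eq_minPerc (G : SimpleGraph V) (r : ℕ) :
    ∃ A : Set V, Percolates G r A ∧ A.ncard = minPerc G r :=
  Nat.sInf_mem (s := {n | ∃ A : Set V, Percolates G r A ∧ A.ncard = n})
    ⟨_, Set.univ, Set.eq_univ_of_univ_subset subset_closure, rfl⟩

lemma spannedByAtMost_range [Finite W] (f : G →g H) (hf : Function.Injective f) :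
    SpannedByAtMost H r (minPerc G r) (Set.range f) := by
  obtain ⟨A, hA, hcard⟩ := exists_percolates_ncard_eq_minPerc G r
  refine ⟨f '' A, ?_, range_subset_closure_image f hf hA⟩
  rw [Set.ncard_image_of_injective A hf, hcard]

lemma minPerc_le_of_spannedByAtMost [Finite V] (hT : Percolates G r T)
    (h : SpannedByAtMost G r k T) : minPerc G r ≤ k :=
  let ⟨_, hA, hTA⟩ := h
  (minPerc_le_ncard (hT.of_subset_closure hTA)).trans hA

end Spanning

section Grid

def IsTranslation {b c : ℕ} (f : Fin b → Fin c) : Prop :=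
  ∃ d : ℕ, ∀ x, (f x : ℕ) = x + d

lemma isTranslation_castAdd (n m : ℕ) :
    IsTranslation (Fin.castAdd m : Fin n → Fin (n + m)) :=
  ⟨0, fun _ => rfl⟩

lemma isTranslation_natAdd (n m : ℕ) :
    IsTranslation (Fin.natAdd n : Fin m → Fin (n + m)) :=
  ⟨n, fun x => Nat.add_comm n x⟩

lemma IsTranslation.injective {b c : ℕ} {f : Fin b → Fin c} (hf : IsTranslation f) :
    Function.Injective f := by
  obtain ⟨d, hd⟩ := hf
  intro x y hxy
  have := congrArg Fin.val hxy
  rw [hd, hd] at this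
  exact Fin.ext (Nat.add_right_cancel this)

variable {b₁ b₂ b₃ c₁ c₂ c₃ : ℕ}
  {f₁ : Fin b₁ → Fin c₁} {f₂ : Fin b₂ → Fin c₂} {f₃ : Fin b₃ → Fin c₃}

def gridHom (h₁ : IsTranslation f₁) (h₂ : IsTranslation f₂) (h₃ : IsTranslation f₃) :
    grid3 b₁ b₂ b₃ →g grid3 c₁ c₂ c₃ where
  toFun := Prod.map f₁ (Prod.map f₂ f₃)
  map_rel' {u v} huv := by
    obtain ⟨d₁, hd₁⟩ := h₁
    obtain ⟨d₂, hd₂⟩ := h₂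
    obtain ⟨d₃, hd₃⟩ := h₃
    simp only [grid3, Prod.map_fst, Prod.map_snd, Prod.ext_iff, Fin.ext_iff, hd₁, hd₂, hd₃] at huv ⊢
    omega

lemma gridHom_injective (h₁ : IsTranslation f₁) (h₂ : IsTranslation f₂)
    (h₃ : IsTranslation f₃) : Function.Injective (gridHom h₁ h₂ h₃) :=
  h₁.injective.prodMap (h₂.injective.prodMap h₃.injective)

end Grid

section Octants

def stepToCut (c x : ℕ) : ℕ := if x < c then x + 1 else x - 1

def distToCut (c x : ℕ) : ℕ := if x < c then c - 1 - x else x - c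

variable {c n x : ℕ}

lemma stepToCut_lt (hc : c < n) (hx : x < n) : stepToCut c x < n := by
  unfold stepToCut; split_ifs <;> omega

lemma stepToCut_adj (hc : 0 < c) : x + 1 = stepToCut c x ∨ stepToCut c x + 1 = x := by
  unfold stepToCut; split_ifs <;> omega

lemma stepToCut_ne (hc : 0 < c) : stepToCut c x ≠ x := by
  have := stepToCut_adj (x := x) hc; omega

lemma decide_le_stepToCut_eq_not_or_distToCut_lt (hc : 0 < c) :
    decide (c ≤ stepToCut c x) = !decide (c ≤ x) ∨
      distToCut c (stepToCut c x) < distToCut c x := by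
  unfold distToCut stepToCut; split_ifs <;> grind

def evenOctants {n₁ n₂ n₃ : ℕ} (c₁ c₂ c₃ : ℕ) : Set (Fin n₁ × Fin n₂ × Fin n₃) :=
  {w | (decide (c₁ ≤ w.1) ^^ decide (c₂ ≤ w.2.1) ^^ decide (c₃ ≤ w.2.2)) = false}

theorem percolates_evenOctants {n₁ n₂ n₃ c₁ c₂ c₃ : ℕ} (hc₁ : 0 < c₁) (hn₁ : c₁ < n₁)
    (hc₂ : 0 < c₂) (hn₂ : c₂ < n₂) (hc₃ : 0 < c₃) (hn₃ : c₃ < n₃) :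
    Percolates (grid3 n₁ n₂ n₃) 3 (evenOctants c₁ c₂ c₃) := by
  refine percolates_of_descent
    (fun w => distToCut c₁ w.1 + distToCut c₂ w.2.1 + distToCut c₃ w.2.2) fun w hw => ?_
  obtain ⟨x, y, z⟩ := w
  simp only [evenOctants, Set.mem_ofPred_eq, Bool.not_eq_false] at hw
  let u₁ : Fin n₁ × Fin n₂ × Fin n₃ := (⟨stepToCut c₁ x, stepToCut_lt hn₁ x.2⟩, y, z)
  let u₂ : Fin n₁ × Fin n₂ × Fin n₃ := (x, ⟨stepToCut c₂ y, stepToCut_lt hn₂ y.2⟩, z)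
  let u₃ : Fin n₁ × Fin n₂ × Fin n₃ := (x, y, ⟨stepToCut c₃ z, stepToCut_lt hn₃ z.2⟩)
  have hne₁ := stepToCut_ne (x := x) hc₁
  have hne₂ := stepToCut_ne (x := y) hc₂
  have hcard : ({u₁, u₂, u₃} : Finset _).card = 3 := by
    refine Finset.card_eq_three.2 ⟨u₁, u₂, u₃, ?_, ?_, ?_, rfl⟩ <;>
      simp [u₁, u₂, u₃, Prod.ext_iff, Fin.ext_iff, hne₁, hne₂]
  refine ⟨{u₁, u₂, u₃}, hcard.ge, ?_⟩
  simp only [Finset.mem_insert, Finset.mem_singleton]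
  rintro u (rfl | rfl | rfl)
  · refine ⟨Or.inl ⟨rfl, stepToCut_adj hc₁⟩, ?_⟩
    rcases decide_le_stepToCut_eq_not_or_distToCut_lt (x := x) hc₁ with hcross | hlt
    · left; simp only [u₁, evenOctants, Set.mem_ofPred_eq, hcross, Bool.not_xor, hw, Bool.not_true]
    · right; simp only [u₁]; omega
  · refine ⟨Or.inr (Or.inl ⟨rfl, rfl, stepToCut_adj hc₂⟩), ?_⟩
    rcases decide_le_stepToCut_eq_not_or_distToCut_lt (x := y) hc₂ with hcross | hlt
    · left
      simp only [u₂, evenOctants, Set.mem_ofPred_eq, hcross, Bool.not_xor, Bool.xor_not, hw,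
        Bool.not_true]
    · right; simp only [u₂]; omega
  · refine ⟨Or.inr (Or.inr ⟨rfl, rfl, stepToCut_adj hc₃⟩), ?_⟩
    rcases decide_le_stepToCut_eq_not_or_distToCut_lt (x := z) hc₃ with hcross | hlt
    · left; simp only [u₃, evenOctants, Set.mem_ofPred_eq, hcross, Bool.xor_not, hw, Bool.not_true]
    · right; simp only [u₃]; omega

end Octants

/-- **Theorem (Statement 17).** Recursive upper bound for `m(·,·,·;3)`. -/
theorem recursive_upper_bound (a11 a12 a21 a22 a31 a32 : ℕ)
    (h11 : 1 ≤ a11) (h12 : 1 ≤ a12) (h21 : 1 ≤ a21) (h22 : 1 ≤ a22)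
    (h31 : 1 ≤ a31) (h32 : 1 ≤ a32) :
    m3 (a11 + a12) (a21 + a22) (a31 + a32) ≤
      m3 a11 a21 a31 + m3 a11 a22 a32 + m3 a12 a21 a32 + m3 a12 a22 a31 := by
  let F₁ := gridHom (isTranslation_castAdd a11 a12) (isTranslation_castAdd a21 a22)
    (isTranslation_castAdd a31 a32)
  let F₂ := gridHom (isTranslation_castAdd a11 a12) (isTranslation_natAdd a21 a22)
    (isTranslation_natAdd a31 a32)
  let F₃ := gridHom (isTranslation_natAdd a11 a12) (isTranslation_castAdd a21 a22)
    (isTranslation_natAdd a31 a32)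
  let F₄ := gridHom (isTranslation_natAdd a11 a12) (isTranslation_natAdd a21 a22)
    (isTranslation_castAdd a31 a32)
  have hcover : evenOctants a11 a21 a31 ⊆
      Set.range F₁ ∪ Set.range F₂ ∪ Set.range F₃ ∪ Set.range F₄ := by
    rintro ⟨x, y, z⟩ hw
    induction x using Fin.addCases with | left x | right x <;>
    induction y using Fin.addCases with | left y | right y <;>
    induction z using Fin.addCases with | left z | right z
    case left.left.left => exact Or.inl (Or.inl (Or.inl ⟨(x, y, z), rfl⟩))
    case left.right.right => exact Or.inl (Or.inl (Or.inr ⟨(x, y, z), rfl⟩))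
    case right.left.right => exact Or.inl (Or.inr ⟨(x, y, z), rfl⟩)
    case right.right.left => exact Or.inr ⟨(x, y, z), rfl⟩
    all_goals simp [evenOctants, Nat.not_le.2 x.2, Nat.not_le.2 y.2, Nat.not_le.2 z.2] at hw
  exact minPerc_le_of_spannedByAtMost
    (percolates_evenOctants h11 (by omega) h21 (by omega) h31 (by omega))
    ((((spannedByAtMost_range F₁ (gridHom_injective _ _ _)).union
      (spannedByAtMost_range F₂ (gridHom_injective _ _ _))).union
      (spannedByAtMost_range F₃ (gridHom_injective _ _ _))).union
      (spannedByAtMost_range F₄ (gridHom_injective _ _ _)) |>.mono hcover)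

end BP
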